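/- For every real F, the number 1 is an eigenvalue of the RevDE matrix R = [[1, F, -F], [-F, 1-F², F+F²], [F+F², -F+F²+F³, 1-2F²-F³]], and the product of the other two (complex) eigenvalues equals 1. -/

import Mathlib

/-!
Expanding the determinant shows `det (X - R) = (X - 1) (X² - t X + 1)` with
`t = 2 - 3F² - F³`. The quadratic factor splits over `ℂ`, and the product of its roots is its
constant term `1`.
-/

open Polynomial

def revDE {R : Type*} [CommRing R] (F : R) : Matrix (Fin 3) (Fin 3) R :=
  !![1, F, -F;
     -F, 1 - F ^ 2, F + F ^ 2;
     F + F ^ 2, -F + F ^ 2 + F ^ 3, 1 - 2 * F ^ 2 - F ^ 3]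

theorem charpoly_revDE {R : Type*} [CommRing R] (F : R) :
    (revDE F).charpoly = (X - 1) * (X ^ 2 - C (2 - 3 * F ^ 2 - F ^ 3) * X + 1) := by
  rw [Matrix.charpoly, Matrix.det_fin_three]
  simp [revDE, Matrix.charmatrix_apply_eq, Matrix.charmatrix_apply_ne, map_ofNat]
  ring

theorem one_mem_spectrum_revDE {R : Type*} [CommRing R] [Nontrivial R] (F : R) :
    (1 : R) ∈ spectrum R (revDE F) :=
  Matrix.mem_spectrum_of_isRoot_charpoly <| by simp [charpoly_revDE]

/-- If `a` is a root, the other root is `t - a`, and `a * (t - a) = c` is the root equation. -/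
theorem exists_X_sq_sub_C_mul_X_add_C_eq_mul {K : Type*} [Field K] [IsAlgClosed K] (t c : K) :
    ∃ a b : K, X ^ 2 - C t * X + C c = (X - C a) * (X - C b) ∧ a * b = c := by
  have hdeg : (X ^ 2 - C t * X + C c : K[X]).degree = 2 := by compute_degree!
  obtain ⟨a, ha⟩ := IsAlgClosed.exists_root (X ^ 2 - C t * X + C c) (by rw [hdeg]; decide)
  have hprod : a * (t - a) = c := by
    simp only [IsRoot, eval_add, eval_sub, eval_mul, eval_pow, eval_X, eval_C] at ha
    linear_combination -ha
  refine ⟨a, t - a, ?_, hprod⟩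
  rw [← hprod]
  simp only [map_sub, map_mul]
  ring

theorem revde_eigenvalue_one_and_product (F : ℝ) :
    (1 : ℂ) ∈ spectrum ℂ
        (!![1, (F : ℂ), -F;
            -F, 1 - F ^ 2, F + F ^ 2;
            F + F ^ 2, -F + F ^ 2 + F ^ 3, 1 - 2 * F ^ 2 - F ^ 3] :
          Matrix (Fin 3) (Fin 3) ℂ) ∧
    ∃ a b : ℂ,
      (!![1, (F : ℂ), -F;
          -F, 1 - F ^ 2, F + F ^ 2;
          F + F ^ 2, -F + F ^ 2 + F ^ 3, 1 - 2 * F ^ 2 - F ^ 3] :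
        Matrix (Fin 3) (Fin 3) ℂ).charpoly = (X - 1) * (X - C a) * (X - C b) ∧
      a * b = 1 := by
  change (1 : ℂ) ∈ spectrum ℂ (revDE (F : ℂ)) ∧
    ∃ a b : ℂ, (revDE (F : ℂ)).charpoly = (X - 1) * (X - C a) * (X - C b) ∧ a * b = 1
  obtain ⟨a, b, hfactor, hab⟩ :=
    exists_X_sq_sub_C_mul_X_add_C_eq_mul (2 - 3 * (F : ℂ) ^ 2 - F ^ 3) 1
  refine ⟨one_mem_spectrum_revDE _, a, b, ?_, hab⟩
  rw [charpoly_revDE, ← map_one C, hfactor, mul_assoc]
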